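/- Let T be a rooted ordered tree and number its vertices so that the vertex numbered k is the k-th visited vertex in Trav for which an even number of visits precede that visit. Then this numbering is a bijection from {1,...,n} to V(T), and for each k, dist_T(v_k, v_{k+1}) ≤ 3. -/

import Mathlib

/-- A finite rooted ordered tree: a root with an ordered list of subtrees. -/
inductive OTree : Type where
  | node : List OTree → OTree

mutual
/-- The visit sequence of the traversal `Trav` of the subtree rooted at the
vertex with address `a`; each vertex is visited exactly twice. -/
def trav : OTree → List ℕ → List (List ℕ)
  | .node [], a => [a, a]
  | .node (t :: ts), a => a :: (travList (t :: ts) a 0 ++ [a])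

def travList : List OTree → List ℕ → ℕ → List (List ℕ)
  | [], _, _ => []
  | t :: ts, a, i => trav t (a ++ [i]) ++ travList ts a (i + 1)
end

/-- Length of the longest common prefix of two addresses. -/
def lcp : List ℕ → List ℕ → ℕ
  | x :: xs, y :: ys => if x = y then lcp xs ys + 1 else 0
  | _, _ => 0

/-- Tree-distance between vertices identified by their addresses. -/
def addrDist (a b : List ℕ) : ℕ := (a.length - lcp a b) + (b.length - lcp a b)

/-- The elements at even positions of a list: these are the visits preceded by
an even number of visits. -/
def evens {α : Type*} : List α → List α
  | [] => []
  | [a] => [a]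
  | a :: _ :: rest => a :: evens rest

/-!
Let `M` be the traversal of the children of a vertex `a`, so that the traversal at `a` is
`a :: M ++ [a]` and `M` has even length. Then the even-position visits at `a` are `a` followed
by the odd-position visits of `M`, and the odd-position visits at `a` are the even-position
visits of `M` followed by `a`; the two listings alternate between preorder and postorder from
one level to the next. By induction each listing contains every vertex exactly once, and its
first and last entries lie at most one level below its root (the root itself at one end).
Where the listings of two sibling subtrees meet, the two adjacent vertices therefore lie at
most two levels and one level below their common parent, so their distance is at most three;
next to the parent itself the distance is at most two.
-/

section EvensOdds

variable {α : Type*}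

def odds (l : List α) : List α := evens l.tail

@[simp] theorem odds_cons (a : α) (l : List α) : odds (a :: l) = evens l := rfl

@[simp] theorem evens_cons (a : α) (l : List α) : evens (a :: l) = a :: odds l := by
  cases l <;> rfl

theorem evens_subset : ∀ l : List α, evens l ⊆ l
  | [] => List.Subset.refl _
  | [_] => List.Subset.refl _
  | a :: _ :: l =>
    List.cons_subset_cons a (List.Subset.trans (evens_subset l) (List.subset_cons_self _ _))

theorem odds_subset (l : List α) : odds l ⊆ l :=
  List.Subset.trans (evens_subset _) (List.tail_subset l)

theorem evens_append_of_even : ∀ {l₁ : List α} (l₂ : List α), Even l₁.length →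
    evens (l₁ ++ l₂) = evens l₁ ++ evens l₂
  | [], _, _ => rfl
  | [_], _, h => absurd h Nat.not_even_one
  | _ :: _ :: l, l₂, h => by
    simp [evens_append_of_even l₂ (by simpa [Nat.even_add_one] using h)]

theorem odds_append_of_even : ∀ {l₁ : List α} (l₂ : List α), Even l₁.length →
    odds (l₁ ++ l₂) = odds l₁ ++ odds l₂
  | [], _, _ => rfl
  | [_], _, h => absurd h Nat.not_even_one
  | _ :: _ :: l, l₂, h => by
    simp [odds_append_of_even l₂ (by simpa [Nat.even_add_one] using h)]

end EvensOdds

theorem length_le_lcp_append : ∀ a x y : List ℕ, a.length ≤ lcp (a ++ x) (a ++ y)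
  | [], _, _ => Nat.zero_le _
  | _ :: a, x, y => by simpa [lcp] using length_le_lcp_append a x y

/-- `x` lies in the subtree of `a`, at most `k` levels below `a`. -/
def DescWithin (a : List ℕ) (k : ℕ) (x : List ℕ) : Prop :=
  a <+: x ∧ x.length ≤ a.length + k

namespace DescWithin

theorem self (a : List ℕ) : DescWithin a 0 a := ⟨List.prefix_refl a, le_rfl⟩

theorem child (a : List ℕ) (i : ℕ) : DescWithin a 1 (a ++ [i]) :=
  ⟨List.prefix_append a [i], by simp⟩

theorem mono {a x : List ℕ} {k l : ℕ} (h : DescWithin a k x) (hkl : k ≤ l) :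
    DescWithin a l x :=
  ⟨h.1, by have := h.2; omega⟩

theorem of_child {a x : List ℕ} {i k : ℕ} (h : DescWithin (a ++ [i]) k x) :
    DescWithin a (k + 1) x :=
  ⟨(List.prefix_append a [i]).trans h.1, by have := h.2; simp at this; omega⟩

theorem addrDist_le {a x y : List ℕ} {k l : ℕ} (hx : DescWithin a k x) (hy : DescWithin a l y) :
    addrDist x y ≤ k + l := by
  obtain ⟨⟨s, rfl⟩, hxk⟩ := hx
  obtain ⟨⟨u, rfl⟩, hyl⟩ := hy
  have := length_le_lcp_append a s u
  simp only [List.length_append] at hxk hyl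
  simp only [addrDist, List.length_append]
  omega

end DescWithin

theorem trav_node (ts : List OTree) (a : List ℕ) :
    trav (.node ts) a = a :: (travList ts a 0 ++ [a]) := by
  cases ts <;> rfl

mutual

theorem even_length_trav : ∀ (t : OTree) (a : List ℕ), Even (trav t a).length
  | .node ts, a => by
    simpa [trav_node, Nat.even_add_one] using even_length_travList ts a 0

theorem even_length_travList : ∀ (ts : List OTree) (a : List ℕ) (i : ℕ),
    Even (travList ts a i).length
  | [], _, _ => by simp [travList]
  | t :: ts, a, i => by
    simpa [travList] using
      (even_length_trav t (a ++ [i])).add (even_length_travList ts a (i + 1))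

end

mutual

theorem prefix_of_mem_trav : ∀ (t : OTree) (a : List ℕ) {b : List ℕ}, b ∈ trav t a → a <+: b
  | .node ts, a, b, h => by
    rw [trav_node] at h
    simp only [List.mem_cons, List.mem_append, List.not_mem_nil, or_false] at h
    rcases h with rfl | h | rfl
    · exact List.prefix_refl b
    · obtain ⟨j, -, hj⟩ := prefix_of_mem_travList ts a 0 h
      exact (List.prefix_append a [j]).trans hj
    · exact List.prefix_refl b

theorem prefix_of_mem_travList : ∀ (ts : List OTree) (a : List ℕ) (i : ℕ) {b : List ℕ},
    b ∈ travList ts a i → ∃ j, i ≤ j ∧ a ++ [j] <+: b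
  | [], _, _, _, h => by simp [travList] at h
  | t :: ts, a, i, b, h => by
    rw [travList, List.mem_append] at h
    rcases h with h | h
    · exact ⟨i, le_rfl, prefix_of_mem_trav t (a ++ [i]) h⟩
    · obtain ⟨j, hij, hj⟩ := prefix_of_mem_travList ts a (i + 1) h
      exact ⟨j, by omega, hj⟩

end

theorem self_notMem_travList (ts : List OTree) (a : List ℕ) (i : ℕ) :
    a ∉ travList ts a i := by
  intro h
  obtain ⟨j, -, hj⟩ := prefix_of_mem_travList ts a i h
  simpa using hj.length_le

theorem disjoint_trav_travList (t : OTree) (ts : List OTree) (a : List ℕ) (i : ℕ) :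
    (trav t (a ++ [i])).Disjoint (travList ts a (i + 1)) := by
  intro b hb hb'
  obtain ⟨j, hij, hj⟩ := prefix_of_mem_travList ts a (i + 1) hb'
  have hi := prefix_of_mem_trav t (a ++ [i]) hb
  have : a ++ [i] = a ++ [j] :=
    (List.prefix_of_prefix_length_le hi hj (by simp)).eq_of_length (by simp)
  simp at this
  omega

theorem evens_trav_node (ts : List OTree) (a : List ℕ) :
    evens (trav (.node ts) a) = a :: odds (travList ts a 0) := by
  rw [trav_node, evens_cons, odds_append_of_even _ (even_length_travList ts a 0)]
  simp [odds, evens]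

theorem odds_trav_node (ts : List OTree) (a : List ℕ) :
    odds (trav (.node ts) a) = evens (travList ts a 0) ++ [a] := by
  rw [trav_node, odds_cons, evens_append_of_even _ (even_length_travList ts a 0)]
  rfl

theorem evens_travList_cons (t : OTree) (ts : List OTree) (a : List ℕ) (i : ℕ) :
    evens (travList (t :: ts) a i) = evens (trav t (a ++ [i])) ++ evens (travList ts a (i + 1)) :=
  evens_append_of_even _ (even_length_trav t _)

theorem odds_travList_cons (t : OTree) (ts : List OTree) (a : List ℕ) (i : ℕ) :
    odds (travList (t :: ts) a i) = odds (trav t (a ++ [i])) ++ odds (travList ts a (i + 1)) :=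
  odds_append_of_even _ (even_length_trav t _)

mutual

theorem trav_subset_evens_odds : ∀ (t : OTree) (a : List ℕ),
    trav t a ⊆ evens (trav t a) ∧ trav t a ⊆ odds (trav t a)
  | .node ts, a => by
    obtain ⟨hE, hO⟩ := travList_subset_evens_odds ts a 0
    rw [evens_trav_node, odds_trav_node, trav_node]
    constructor <;> intro b hb <;>
      simp only [List.mem_cons, List.mem_append, List.not_mem_nil, or_false] at hb ⊢
    · have := @hO b; tauto
    · have := @hE b; tauto

theorem travList_subset_evens_odds : ∀ (ts : List OTree) (a : List ℕ) (i : ℕ),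
    travList ts a i ⊆ evens (travList ts a i) ∧ travList ts a i ⊆ odds (travList ts a i)
  | [], _, _ => by simp [travList]
  | t :: ts, a, i => by
    obtain ⟨hE, hO⟩ := trav_subset_evens_odds t (a ++ [i])
    obtain ⟨hE', hO'⟩ := travList_subset_evens_odds ts a (i + 1)
    rw [evens_travList_cons, odds_travList_cons, travList]
    constructor <;> intro b hb <;> simp only [List.mem_append] at hb ⊢
    · exact hb.imp (@hE b) (@hE' b)
    · exact hb.imp (@hO b) (@hO' b)

end

mutual

theorem nodup_evens_odds_trav : ∀ (t : OTree) (a : List ℕ),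
    (evens (trav t a)).Nodup ∧ (odds (trav t a)).Nodup
  | .node ts, a => by
    obtain ⟨hE, hO⟩ := nodup_evens_odds_travList ts a 0
    have ha := self_notMem_travList ts a 0
    rw [evens_trav_node, odds_trav_node]
    exact ⟨List.nodup_cons.2 ⟨fun h => ha (odds_subset _ h), hO⟩,
      hE.append (List.nodup_singleton a)
        (List.disjoint_singleton.2 fun h => ha (evens_subset _ h))⟩

theorem nodup_evens_odds_travList : ∀ (ts : List OTree) (a : List ℕ) (i : ℕ),
    (evens (travList ts a i)).Nodup ∧ (odds (travList ts a i)).Nodup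
  | [], _, _ => by simp [travList, odds, evens]
  | t :: ts, a, i => by
    obtain ⟨hE, hO⟩ := nodup_evens_odds_trav t (a ++ [i])
    obtain ⟨hE', hO'⟩ := nodup_evens_odds_travList ts a (i + 1)
    have hdisj := disjoint_trav_travList t ts a i
    rw [evens_travList_cons, odds_travList_cons]
    exact ⟨hE.append hE' fun b hb hb' => hdisj (evens_subset _ hb) (evens_subset _ hb'),
      hO.append hO' fun b hb hb' => hdisj (odds_subset _ hb) (odds_subset _ hb')⟩

end

theorem head?_evens_trav (t : OTree) (a : List ℕ) : (evens (trav t a)).head? = some a := by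
  cases t
  rw [evens_trav_node]
  rfl

theorem getLast?_odds_trav (t : OTree) (a : List ℕ) : (odds (trav t a)).getLast? = some a := by
  cases t
  simp [odds_trav_node]

theorem descWithin_of_mem_head?_evens_travList {ts : List OTree} {a : List ℕ} {i : ℕ}
    {x : List ℕ} (hx : x ∈ (evens (travList ts a i)).head?) : DescWithin a 1 x := by
  cases ts with
  | nil => simp [travList, evens] at hx
  | cons t ts =>
    rw [evens_travList_cons, List.head?_append, head?_evens_trav] at hx
    obtain rfl := Option.some_inj.1 hx
    exact DescWithin.child a i

theorem descWithin_of_mem_getLast?_odds_travList {ts : List OTree} {a : List ℕ} {i : ℕ}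
    {x : List ℕ} (hx : x ∈ (odds (travList ts a i)).getLast?) : DescWithin a 1 x := by
  induction ts generalizing i with
  | nil => simp [travList, odds, evens] at hx
  | cons t ts ih =>
    rw [odds_travList_cons, List.getLast?_append, getLast?_odds_trav] at hx
    rcases Option.or_eq_some_iff.1 hx with hx | ⟨-, hx⟩
    · exact ih hx
    · obtain rfl := Option.some_inj.1 hx
      exact DescWithin.child a i

theorem descWithin_of_mem_head?_odds_trav {t : OTree} {a x : List ℕ}
    (hx : x ∈ (odds (trav t a)).head?) : DescWithin a 1 x := by
  obtain ⟨ts⟩ := t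
  rw [odds_trav_node, List.head?_append] at hx
  rcases Option.or_eq_some_iff.1 hx with hx | ⟨-, hx⟩
  · exact descWithin_of_mem_head?_evens_travList hx
  · obtain rfl := Option.some_inj.1 hx
    exact (DescWithin.self _).mono zero_le_one

theorem descWithin_of_mem_getLast?_evens_trav {t : OTree} {a x : List ℕ}
    (hx : x ∈ (evens (trav t a)).getLast?) : DescWithin a 1 x := by
  obtain ⟨ts⟩ := t
  rw [evens_trav_node, List.getLast?_cons] at hx
  cases h : (odds (travList ts a 0)).getLast? with
  | none =>
    obtain rfl : a = x := by simpa [h] using hx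
    exact (DescWithin.self a).mono zero_le_one
  | some y =>
    obtain rfl : y = x := by simpa [h] using hx
    exact descWithin_of_mem_getLast?_odds_travList h

theorem descWithin_of_mem_getLast?_evens_travList {ts : List OTree} {a : List ℕ} {i : ℕ}
    {x : List ℕ} (hx : x ∈ (evens (travList ts a i)).getLast?) : DescWithin a 2 x := by
  induction ts generalizing i with
  | nil => simp [travList, evens] at hx
  | cons t ts ih =>
    rw [evens_travList_cons, List.getLast?_append] at hx
    rcases Option.or_eq_some_iff.1 hx with hx | ⟨-, hx⟩
    · exact ih hx
    · exact (descWithin_of_mem_getLast?_evens_trav hx).of_child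

theorem descWithin_of_mem_head?_odds_travList {ts : List OTree} {a : List ℕ} {i : ℕ}
    {x : List ℕ} (hx : x ∈ (odds (travList ts a i)).head?) : DescWithin a 2 x := by
  cases ts with
  | nil => simp [travList, odds, evens] at hx
  | cons t ts =>
    rw [odds_travList_cons, List.head?_append] at hx
    rcases Option.or_eq_some_iff.1 hx with hx | ⟨hnone, -⟩
    · exact (descWithin_of_mem_head?_odds_trav hx).of_child
    · have := getLast?_odds_trav t (a ++ [i])
      simp [List.head?_eq_none_iff.1 hnone] at this

mutual

theorem isChain_evens_odds_trav : ∀ (t : OTree) (a : List ℕ),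
    (evens (trav t a)).IsChain (addrDist · · ≤ 3) ∧
      (odds (trav t a)).IsChain (addrDist · · ≤ 3)
  | .node ts, a => by
    obtain ⟨hE, hO⟩ := isChain_evens_odds_travList ts a 0
    rw [evens_trav_node, odds_trav_node]
    refine ⟨hO.cons fun y hy => ?_, hE.append (List.isChain_singleton a) fun x hx y hy => ?_⟩
    · exact ((DescWithin.self a).addrDist_le (descWithin_of_mem_head?_odds_travList hy)).trans
        (by norm_num)
    · obtain rfl : a = y := Option.some_inj.1 hy
      exact ((descWithin_of_mem_getLast?_evens_travList hx).addrDist_le (DescWithin.self a)).trans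
        (by norm_num)

theorem isChain_evens_odds_travList : ∀ (ts : List OTree) (a : List ℕ) (i : ℕ),
    (evens (travList ts a i)).IsChain (addrDist · · ≤ 3) ∧
      (odds (travList ts a i)).IsChain (addrDist · · ≤ 3)
  | [], _, _ => by simp [travList, odds, evens]
  | t :: ts, a, i => by
    obtain ⟨hE, hO⟩ := isChain_evens_odds_trav t (a ++ [i])
    obtain ⟨hE', hO'⟩ := isChain_evens_odds_travList ts a (i + 1)
    rw [evens_travList_cons, odds_travList_cons]
    refine ⟨hE.append hE' fun x hx y hy => ?_, hO.append hO' fun x hx y hy => ?_⟩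
    · exact (descWithin_of_mem_getLast?_evens_trav hx).of_child.addrDist_le
        (descWithin_of_mem_head?_evens_travList hy)
    · rw [getLast?_odds_trav] at hx
      obtain rfl := Option.some_inj.1 hx
      exact (DescWithin.child a i).addrDist_le (descWithin_of_mem_head?_odds_travList hy)

end

/-- The `Trav`-based numbering: the vertex numbered `k` is the `k`-th visited
vertex among the visits preceded by an even number of visits.  This numbering
is a bijection onto the vertex set (the listing `evens (trav t [])` has no
duplicates and contains exactly the vertices of the tree), and any two
consecutively numbered vertices are at tree-distance at most 3. -/
theorem trav_numbering (t : OTree) :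
    (evens (trav t [])).Nodup ∧
    (∀ a : List ℕ, a ∈ evens (trav t []) ↔ a ∈ trav t []) ∧
    (∀ (k : ℕ) (h : k + 1 < (evens (trav t [])).length),
        addrDist ((evens (trav t []))[k]'(Nat.lt_of_succ_lt h))
          ((evens (trav t []))[k + 1]'h) ≤ 3) :=
  ⟨(nodup_evens_odds_trav t []).1,
    fun _ => ⟨(evens_subset _ ·), ((trav_subset_evens_odds t []).1 ·)⟩,
    List.isChain_iff_getElem.1 (isChain_evens_odds_trav t []).1⟩
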